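/- There is a constant c > 0 depending only on n with the following property. For every axis-parallel spacetime cube Q of sidelength 1, there exists a red wave φ of frequency 1 with M(φ) = 1 such that |φ(t,x)| ≥ c for every (t,x) ∈ Q. (That is, a red wave of frequency 1 and unit mass can concentrate on any given unit cube of spacetime.) -/

import Mathlib

open MeasureTheory Real Set
open scoped RealInnerProductSpace

noncomputable section

abbrev Spc (n : ℕ) := EuclideanSpace ℝ (Fin n)

/-- The first standard basis vector of ℝⁿ. -/
def e1 (n : ℕ) : Spc n :=
  (EuclideanSpace.equiv (Fin n) ℝ).symm (fun i => if (i : ℕ) = 0 then 1 else 0)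

/-- Frequency support region for red waves of frequency 1. -/
def redSet (n : ℕ) : Set (Spc n) :=
  {ξ | 1 ≤ ‖ξ‖ ∧ ‖ξ‖ ≤ 2 ∧ (inner ℝ ξ (e1 n) : ℝ) ≥ ‖ξ‖ * Real.cos (π / 8)}

/-- Frequency support region for blue waves of frequency 2^k. -/
def blueSet (n k : ℕ) : Set (Spc n) :=
  {ξ | (2 : ℝ) ^ k ≤ ‖ξ‖ ∧ ‖ξ‖ ≤ 2 ^ (k + 1) ∧ (inner ℝ ξ (e1 n) : ℝ) ≥ ‖ξ‖ * Real.cos (π / 8)}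

/-- The wave with Fourier data `fp` on the upper cone and `fm` on the lower cone. -/
def wave (n : ℕ) (fp fm : Spc n → ℂ) : ℝ × Spc n → ℂ := fun p =>
  (∫ ξ : Spc n, fp ξ * Complex.exp (2 * π * Complex.I * ((p.1 * ‖ξ‖ + (inner ℝ p.2 ξ : ℝ) : ℝ) : ℂ))) +
  (∫ ξ : Spc n, fm ξ * Complex.exp (2 * π * Complex.I * ((-(p.1 * ‖ξ‖) + (inner ℝ p.2 ξ : ℝ) : ℝ) : ℂ)))

/-- The mass of a wave with data `(fp, fm)`. -/
def mass (n : ℕ) (fp fm : Spc n → ℂ) : ℝ :=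
  (∫ ξ : Spc n, ‖fp ξ‖ ^ 2) + (∫ ξ : Spc n, ‖fm ξ‖ ^ 2)

/-- `fp` is admissible data for a red wave of frequency 1. -/
def IsRedData (n : ℕ) (fp : Spc n → ℂ) : Prop :=
  Integrable fp ∧ MemLp fp 2 ∧ ∀ ξ, ξ ∉ redSet n → fp ξ = 0

/-- `fm` is admissible data for a blue wave of frequency `2^k`. -/
def IsBlueData (n k : ℕ) (fm : Spc n → ℂ) : Prop :=
  Integrable fm ∧ MemLp fm 2 ∧ ∀ ξ, ξ ∉ blueSet n k → fm ξ = 0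

/-- Axis-parallel spacetime cube of sidelength `R` centred at `(t₀, x₀)`. -/
def cube (n : ℕ) (t₀ : ℝ) (x₀ : Spc n) (R : ℝ) : Set (ℝ × Spc n) :=
  {p | |p.1 - t₀| ≤ R / 2 ∧ ∀ i, |p.2 i - x₀ i| ≤ R / 2}

/-- `ω` is an admissible tube direction. -/
def IsDir (n : ℕ) (ω : Spc n) : Prop :=
  ‖ω‖ = 1 ∧ (inner ℝ ω (e1 n) : ℝ) ≥ Real.cos (π / 8)

/-- The `1 × 2^k` tube in direction `(1, ω)`. -/
def tube (n : ℕ) (t₀ : ℝ) (x₀ ω : Spc n) (k : ℕ) : Set (ℝ × Spc n) :=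
  {p | |p.1 - t₀| ≤ 2 ^ k ∧ ‖p.2 - x₀ - (p.1 - t₀) • ω‖ ≤ 1}

/-- The infinite tube of radius `r` in direction `(1, ω)`. -/
def tubeR (n : ℕ) (t₀ : ℝ) (x₀ ω : Spc n) (r : ℝ) : Set (ℝ × Spc n) :=
  {p | ‖p.2 - x₀ - (p.1 - t₀) • ω‖ ≤ r}

/-- The infinite tube in direction `(1, ω)`. -/
def infTube (n : ℕ) (t₀ : ℝ) (x₀ ω : Spc n) : Set (ℝ × Spc n) :=
  tubeR n t₀ x₀ ω 1

/-- Euclidean distance on spacetime `ℝ^{1+n}`. -/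
def edist1n (n : ℕ) (p q : ℝ × Spc n) : ℝ :=
  Real.sqrt ((p.1 - q.1) ^ 2 + ‖p.2 - q.2‖ ^ 2)

/-- Euclidean distance from a point to a set in spacetime. -/
def distToSet (n : ℕ) (p : ℝ × Spc n) (S : Set (ℝ × Spc n)) : ℝ :=
  ⨅ q : S, edist1n n p (q : ℝ × Spc n)

/-- The margin of a red wave of frequency 1 with data `fp`. -/
def margin (n : ℕ) (fp : Spc n → ℂ) : ℝ :=
  ⨅ ξ : Function.support fp, ⨅ ζ : {ζ : Spc n // ζ ∉ redSet n},
    edist1n n (‖(ξ : Spc n)‖, (ξ : Spc n)) (‖(ζ : Spc n)‖, (ζ : Spc n))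

/-- `sup {‖φ(t,x)‖ : (t,x) ∈ Ω}`, with the convention `sup ∅ = 0`. -/
def supOn (n : ℕ) (φ : ℝ × Spc n → ℂ) (Ω : Set (ℝ × Spc n)) (t : ℝ) : ℝ :=
  sSup {r | ∃ x : Spc n, (t, x) ∈ Ω ∧ r = ‖φ (t, x)‖}


/-!
Take for `f₊` a bump of constant modulus and unit mass on a small ball around `(3/2) e₁`, which
lies in the red sector, modulated by `e^{-2πi(t₀|ξ| + x₀·ξ)}` so that the wave is centred at
`(t₀, x₀)`. For `(t, x)` in the unit cube around that point, the phase
`2π((t - t₀)|ξ| + (x - x₀)·ξ)` varies by at most `π/3` over the ball, so the integrand stays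
within a sector of half-angle `π/3` and the integral has modulus at least half the `L¹` norm
of `f₊`, namely `√|ball| / 2`.
-/

lemma Real.cos_pi_div_eight_lt : Real.cos (π / 8) < 0.93 := by
  have h2 : √2 < 1.45 := by nlinarith [Real.sq_sqrt (zero_le_two : (0 : ℝ) ≤ 2), Real.sqrt_nonneg 2]
  have h3 : √(2 + √2) < 1.86 := by
    nlinarith [Real.sq_sqrt (by positivity : (0 : ℝ) ≤ 2 + √2), Real.sqrt_nonneg (2 + √2)]
  rw [Real.cos_pi_div_eight]
  linarith

lemma EuclideanSpace.norm_le_sqrt_card_mul {n : ℕ} {v : EuclideanSpace ℝ (Fin n)} {r : ℝ}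
    (hr : 0 ≤ r) (hv : ∀ i, |v i| ≤ r) : ‖v‖ ≤ √n * r := by
  have hsum : ∑ i, ‖v i‖ ^ 2 ≤ n * r ^ 2 := by
    calc ∑ i, ‖v i‖ ^ 2 ≤ ∑ _i : Fin n, r ^ 2 :=
          Finset.sum_le_sum fun i _ => pow_le_pow_left₀ (norm_nonneg _) (hv i) 2
      _ = n * r ^ 2 := by simp
  rw [EuclideanSpace.norm_eq, ← Real.sqrt_sq hr, ← Real.sqrt_mul (Nat.cast_nonneg n)]
  exact Real.sqrt_le_sqrt hsum

lemma norm_sub_le_of_mem_cube {n : ℕ} {t₀ R : ℝ} {x₀ : Spc n} {p : ℝ × Spc n}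
    (hR : 0 ≤ R) (hp : p ∈ cube n t₀ x₀ R) : ‖p.2 - x₀‖ ≤ √n * (R / 2) :=
  EuclideanSpace.norm_le_sqrt_card_mul (by positivity) fun i => hp.2 i

lemma norm_e1 {n : ℕ} (hn : 0 < n) : ‖e1 n‖ = 1 := by
  have : e1 n = EuclideanSpace.single (⟨0, hn⟩ : Fin n) 1 := by
    ext i
    simp [e1, Fin.ext_iff]
  rw [this, PiLp.norm_single, norm_one]

-- The cone condition `⟪ξ, e₁⟫ ≥ ‖ξ‖ cos (π/8)` survives a perturbation of size `1/20` because
-- `(3/2 - 1/20) / (3/2 + 1/20) > 0.93 > cos (π/8)`.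
lemma closedBall_subset_redSet {n : ℕ} (hn : 0 < n) {δ : ℝ} (hδ : δ ≤ 1 / 20) :
    Metric.closedBall ((3 / 2 : ℝ) • e1 n) δ ⊆ redSet n := by
  intro ξ hξ
  rw [Metric.mem_closedBall, dist_eq_norm] at hξ
  have hcenter : ‖(3 / 2 : ℝ) • e1 n‖ = 3 / 2 := by
    rw [norm_smul, norm_e1 hn]; norm_num
  have hnorm : |‖ξ‖ - 3 / 2| ≤ δ := hcenter ▸ (abs_norm_sub_norm_le _ _).trans hξ
  have hinner : |inner ℝ ξ (e1 n) - 3 / 2| ≤ δ := by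
    have hsplit : inner ℝ ξ (e1 n) - 3 / 2 = inner ℝ (ξ - (3 / 2 : ℝ) • e1 n) (e1 n) := by
      rw [inner_sub_left, real_inner_smul_left, real_inner_self_eq_norm_sq, norm_e1 hn]; norm_num
    rw [hsplit]
    calc _ ≤ ‖ξ - (3 / 2 : ℝ) • e1 n‖ * ‖e1 n‖ := abs_real_inner_le_norm _ _
      _ ≤ δ := by rw [norm_e1 hn, mul_one]; exact hξ
  have hcos_nonneg : 0 ≤ Real.cos (π / 8) :=
    Real.cos_nonneg_of_mem_Icc ⟨by linarith [Real.pi_pos], by linarith [Real.pi_pos]⟩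
  obtain ⟨hn₁, hn₂⟩ := abs_le.1 hnorm
  obtain ⟨hi₁, -⟩ := abs_le.1 hinner
  refine ⟨by linarith, by linarith, ?_⟩
  nlinarith [Real.cos_pi_div_eight_lt]

lemma abs_phase_sub_le {E : Type*} [NormedAddCommGroup E] [InnerProductSpace ℝ E]
    (t : ℝ) (x ξ ξ₀ : E) :
    |t * (‖ξ‖ - ‖ξ₀‖) + inner ℝ x (ξ - ξ₀)| ≤ (|t| + ‖x‖) * ‖ξ - ξ₀‖ := by
  calc _ ≤ |t| * |‖ξ‖ - ‖ξ₀‖| + |inner ℝ x (ξ - ξ₀)| := by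
        rw [← abs_mul]; exact abs_add_le _ _
    _ ≤ |t| * ‖ξ - ξ₀‖ + ‖x‖ * ‖ξ - ξ₀‖ := by
        gcongr
        · exact abs_norm_sub_norm_le _ _
        · exact abs_real_inner_le_norm _ _
    _ = (|t| + ‖x‖) * ‖ξ - ξ₀‖ := by ring

-- Rotating by `e^{-iθ₀}` puts every value of the integrand in the half plane `re ≥ cos r`.
lemma cos_mul_measureReal_le_norm_setIntegral_exp {α : Type*} [MeasurableSpace α]
    {μ : Measure α} {s : Set α} (hs : MeasurableSet s) (hμs : μ s ≠ ⊤) {θ : α → ℝ}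
    (hθ : Measurable θ) {θ₀ r : ℝ} (hr : r ≤ π) (hθs : ∀ x ∈ s, |θ x - θ₀| ≤ r) :
    Real.cos r * μ.real s ≤ ‖∫ x in s, Complex.exp (θ x * Complex.I) ∂μ‖ := by
  have hint : IntegrableOn (fun x => Complex.exp ((θ x - θ₀ : ℝ) * Complex.I)) s μ :=
    Measure.integrableOn_of_bounded (M := 1) hμs (by fun_prop)
      (ae_of_all _ fun x => (Complex.norm_exp_ofReal_mul_I _).le)
  have hrotate : ∀ x, Complex.exp ((θ x - θ₀ : ℝ) * Complex.I) =
      Complex.exp ((-θ₀ : ℝ) * Complex.I) * Complex.exp (θ x * Complex.I) := fun x => by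
    rw [← Complex.exp_add]; push_cast; ring_nf
  calc Real.cos r * μ.real s = ∫ x in s, Real.cos r ∂μ := by
        rw [setIntegral_const, smul_eq_mul, mul_comm]
    _ ≤ ∫ x in s, Real.cos (θ x - θ₀) ∂μ := by
        refine setIntegral_mono_on (integrableOn_const hμs) ?_ hs fun x hx => ?_
        · change Integrable _ (μ.restrict s)
          simpa only [RCLike.re_to_complex, Complex.exp_ofReal_mul_I_re] using hint.re
        · rw [← Real.cos_abs (θ x - θ₀)]
          exact Real.cos_le_cos_of_nonneg_of_le_pi (abs_nonneg _) hr (hθs x hx)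
    _ = (∫ x in s, Complex.exp ((θ x - θ₀ : ℝ) * Complex.I) ∂μ).re := by
        simpa only [RCLike.re_to_complex, Complex.exp_ofReal_mul_I_re] using integral_re hint
    _ ≤ ‖∫ x in s, Complex.exp ((θ x - θ₀ : ℝ) * Complex.I) ∂μ‖ := Complex.re_le_norm _
    _ = ‖∫ x in s, Complex.exp (θ x * Complex.I) ∂μ‖ := by
        simp only [hrotate, integral_const_mul, norm_mul, Complex.norm_exp_ofReal_mul_I, one_mul]

-- The modulation moves the wave to `(t₀, x₀)`; the constant amplitude normalises the mass.
def wavePacket (n : ℕ) (s : Set (Spc n)) (t₀ : ℝ) (x₀ : Spc n) : Spc n → ℂ :=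
  s.indicator fun ξ => ((√(volume.real s))⁻¹ : ℝ) *
    Complex.exp ((-(2 * π * (t₀ * ‖ξ‖ + inner ℝ x₀ ξ)) : ℝ) * Complex.I)

section WavePacket

variable {n : ℕ} {s : Set (Spc n)} {t₀ : ℝ} {x₀ : Spc n}

lemma norm_wavePacket (ξ : Spc n) :
    ‖wavePacket n s t₀ x₀ ξ‖ = s.indicator (fun _ => (√(volume.real s))⁻¹) ξ := by
  by_cases h : ξ ∈ s
  · rw [wavePacket, indicator_of_mem h, indicator_of_mem h, norm_mul, Complex.norm_exp_ofReal_mul_I,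
      mul_one, Complex.norm_real, Real.norm_of_nonneg (by positivity)]
  · simp [wavePacket, h]

lemma memLp_wavePacket (hs : MeasurableSet s) (hμs : volume s ≠ ⊤) (q : ENNReal) :
    MemLp (wavePacket n s t₀ x₀) q := by
  have : IsFiniteMeasure (volume.restrict s) := isFiniteMeasure_restrict.2 hμs
  refine (memLp_indicator_iff_restrict hs).2 (MemLp.of_bound (by fun_prop) (√(volume.real s))⁻¹
    (ae_of_all _ fun ξ => ?_))
  rw [norm_mul, Complex.norm_exp_ofReal_mul_I, mul_one, Complex.norm_real,
    Real.norm_of_nonneg (by positivity)]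

lemma isRedData_wavePacket (hs : MeasurableSet s) (hμs : volume s ≠ ⊤) (hred : s ⊆ redSet n) :
    IsRedData n (wavePacket n s t₀ x₀) :=
  ⟨memLp_one_iff_integrable.1 (memLp_wavePacket hs hμs 1), memLp_wavePacket hs hμs 2,
    fun _ hξ => indicator_of_notMem (fun h => hξ (hred h)) _⟩

lemma mass_wavePacket (hs : MeasurableSet s) (hμs₀ : volume s ≠ 0) (hμs : volume s ≠ ⊤) :
    mass n (wavePacket n s t₀ x₀) 0 = 1 := by
  have hV : 0 < volume.real s := ENNReal.toReal_pos hμs₀ hμs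
  have hsq : ∀ ξ, ‖wavePacket n s t₀ x₀ ξ‖ ^ 2 = s.indicator (fun _ => (volume.real s)⁻¹) ξ := by
    intro ξ
    by_cases h : ξ ∈ s <;> simp [norm_wavePacket, h, Real.sq_sqrt hV.le]
  simp only [mass, hsq, Pi.zero_apply, norm_zero]
  rw [integral_indicator_const _ hs]
  simp [hV.ne']

lemma wave_wavePacket (hs : MeasurableSet s) (p : ℝ × Spc n) :
    wave n (wavePacket n s t₀ x₀) 0 p = ((√(volume.real s))⁻¹ : ℝ) * ∫ ξ in s,
      Complex.exp ((2 * π * ((p.1 - t₀) * ‖ξ‖ + inner ℝ (p.2 - x₀) ξ) : ℝ) * Complex.I) := by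
  simp only [wave, Pi.zero_apply, zero_mul, integral_zero, add_zero]
  rw [← integral_const_mul, ← integral_indicator hs]
  congr 1
  funext ξ
  by_cases h : ξ ∈ s
  · simp only [wavePacket, indicator_of_mem h, mul_assoc, ← Complex.exp_add]
    congr 2
    rw [inner_sub_left]
    push_cast
    ring
  · simp [wavePacket, h]

lemma sqrt_measureReal_div_two_le_norm_wave_wavePacket (hs : MeasurableSet s)
    (hμs : volume s ≠ ⊤) {p : ℝ × Spc n} {ξ₀ : Spc n}
    (hphase : ∀ ξ ∈ s, |(p.1 - t₀) * (‖ξ‖ - ‖ξ₀‖) + inner ℝ (p.2 - x₀) (ξ - ξ₀)| ≤ 1 / 6) :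
    √(volume.real s) / 2 ≤ ‖wave n (wavePacket n s t₀ x₀) 0 p‖ := by
  set θ : Spc n → ℝ := fun ξ => 2 * π * ((p.1 - t₀) * ‖ξ‖ + inner ℝ (p.2 - x₀) ξ)
  have hθ : ∀ ξ ∈ s, |θ ξ - θ ξ₀| ≤ π / 3 := fun ξ hξ => by
    have hdiff : θ ξ - θ ξ₀ =
        2 * π * ((p.1 - t₀) * (‖ξ‖ - ‖ξ₀‖) + inner ℝ (p.2 - x₀) (ξ - ξ₀)) := by
      simp only [θ, inner_sub_right]; ring
    rw [hdiff, abs_mul, abs_of_pos (by positivity : 0 < 2 * π)]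
    nlinarith [hphase ξ hξ, Real.pi_pos]
  have hint := cos_mul_measureReal_le_norm_setIntegral_exp hs hμs (by fun_prop)
    (by linarith [Real.pi_pos]) hθ
  rw [Real.cos_pi_div_three] at hint
  rw [wave_wavePacket hs, norm_mul, Complex.norm_real, Real.norm_eq_abs,
    abs_of_nonneg (by positivity)]
  calc √(volume.real s) / 2 = (√(volume.real s))⁻¹ * (1 / 2 * volume.real s) := by
        rw [mul_left_comm, inv_mul_eq_div, Real.div_sqrt]; ring
    _ ≤ _ := by gcongr

end WavePacket

/-- A red wave of frequency 1 and unit mass can concentrate on any given unit cube. -/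
theorem red_wave_concentrates_on_cube (n : ℕ) (hn : 2 ≤ n) :
    ∃ c : ℝ, 0 < c ∧ ∀ (t₀ : ℝ) (x₀ : Spc n),
      ∃ fp : Spc n → ℂ, IsRedData n fp ∧ mass n fp 0 = 1 ∧
        ∀ p ∈ cube n t₀ x₀ 1, c ≤ ‖wave n fp 0 p‖ := by
  -- `δ ≤ 1/20` keeps the ball in the red sector, and `|t - t₀| + ‖x - x₀‖ ≤ (1 + √n) / 2` on the
  -- cube, so the phase oscillates by at most `1/40` over the ball.
  set δ : ℝ := 1 / (20 * (1 + √n))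
  set ξ₀ : Spc n := (3 / 2 : ℝ) • e1 n
  set s := Metric.closedBall ξ₀ δ
  have hδ : 0 < δ := by positivity
  have hμs : volume s ≠ ⊤ := measure_closedBall_lt_top.ne
  have hμs₀ : volume s ≠ 0 := (Metric.measure_closedBall_pos volume _ hδ).ne'
  have hred : s ⊆ redSet n := closedBall_subset_redSet (by omega) <| by
    rw [div_le_div_iff_of_pos_left one_pos (by positivity) (by norm_num)]
    nlinarith [Real.sqrt_nonneg n]
  refine ⟨√(volume.real s) / 2, half_pos (Real.sqrt_pos.2 (ENNReal.toReal_pos hμs₀ hμs)),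
    fun t₀ x₀ => ⟨wavePacket n s t₀ x₀, isRedData_wavePacket measurableSet_closedBall hμs hred,
      mass_wavePacket measurableSet_closedBall hμs₀ hμs, fun p hp =>
      sqrt_measureReal_div_two_le_norm_wave_wavePacket measurableSet_closedBall hμs (ξ₀ := ξ₀)
        fun ξ hξ => ?_⟩⟩
  calc _ ≤ (|p.1 - t₀| + ‖p.2 - x₀‖) * ‖ξ - ξ₀‖ := abs_phase_sub_le _ _ _ _
    _ ≤ (1 / 2 + √n * (1 / 2)) * δ := by
        gcongr
        · exact hp.1
        · exact norm_sub_le_of_mem_cube zero_le_one hp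
        · exact mem_closedBall_iff_norm.1 hξ
    _ = 1 / 40 := by simp only [δ]; field_simp; ring
    _ ≤ 1 / 6 := by norm_num

end
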